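/- For n ≥ 1, the number of plane trees with n edges, i old leaves, and j young leaves is (1/n)·C(n,i)·C(n-i,j)·C(n-i-j,i-1). -/

import Mathlib

/-!
A plane tree with `n + 1` edges is determined by the first child of its root and the list of the
remaining children. Removing the second child recursively encodes it as a unary-binary (Motzkin)
tree of size `n`, a binary node counting twice: a single child `c` gives a unary node over `c` (a
leaf if `c` is a leaf), a leaf in second position a marked unary node, and any other second child
the left branch of a binary node. Young leaves become marked unary nodes and all old leaves but
one become binary nodes. In the preorder word of the Motzkin tree the letters `U`, `D` of the
binary nodes form a Dyck word of semilength `i - 1` on `2(i - 1)` of the `n - 1` positions, and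
`j` of the remaining positions are marked, so the count is
`C(n-1, 2(i-1)) · Cat(i-1) · C(n-1-2(i-1), j)`. This equals the claimed formula by
`(k+1) Cat(k) = C(2k, k)` and `C(m,k) C(m-k,j) = C(m,j) C(m-j,k)`.
-/

/-- A plane tree: a root together with an ordered (possibly empty) list of subtrees. -/
inductive PlaneTree where
  | node : List PlaneTree → PlaneTree

namespace PlaneTree

/-- The number of edges of a plane tree. -/
def edges : PlaneTree → ℕ
  | node ts => (ts.attach.map (fun t => edges t.1 + 1)).sum
decreasing_by have := List.sizeOf_lt_of_mem t.2; simp at *; omega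

/-- Indicator that a tree is a single vertex (i.e. the corresponding child is a leaf). -/
def isLeafInd : PlaneTree → ℕ
  | node [] => 1
  | node (_ :: _) => 0

/-- The number of old leaves: leaves that are the leftmost child of their parent. -/
def oldLeaves : PlaneTree → ℕ
  | node [] => 0
  | node (t :: ts) =>
      isLeafInd t + oldLeaves t + (ts.attach.map (fun s => oldLeaves s.1)).sum
decreasing_by
  · simp; omega
  · have := List.sizeOf_lt_of_mem s.2; simp at *; omega

/-- The number of young leaves: leaves that are not the leftmost child of their parent. -/
def youngLeaves : PlaneTree → ℕ
  | node [] => 0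
  | node (t :: ts) =>
      youngLeaves t + (ts.attach.map (fun s => isLeafInd s.1 + youngLeaves s.1)).sum
decreasing_by
  · simp; omega
  · have := List.sizeOf_lt_of_mem s.2; simp at *; omega

end PlaneTree

namespace List
variable {α β : Type*}

lemma length_filterMap_getLeft? (l : List (α ⊕ β)) :
    (l.filterMap Sum.getLeft?).length = (l.map Sum.isLeft).count true := by
  induction l with
  | nil => rfl
  | cons x l ih => cases x <;> simp [filterMap_cons, ih]

lemma length_filterMap_getRight? (l : List (α ⊕ β)) :
    (l.filterMap Sum.getRight?).length = (l.map Sum.isLeft).count false := by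
  induction l with
  | nil => rfl
  | cons x l ih => cases x <;> simp [filterMap_cons, ih]

lemma eq_of_map_isLeft_eq {l l' : List (α ⊕ β)} (h : l.map Sum.isLeft = l'.map Sum.isLeft)
    (hl : l.filterMap Sum.getLeft? = l'.filterMap Sum.getLeft?)
    (hr : l.filterMap Sum.getRight? = l'.filterMap Sum.getRight?) : l = l' := by
  induction l generalizing l' with
  | nil => simpa using h.symm
  | cons x l ih =>
    rcases l' with _ | ⟨x', l'⟩
    · simp at h
    · rcases x with a | b <;> rcases x' with a' | b' <;> simp [filterMap_cons] at h hl hr ⊢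
      · exact ⟨hl.1, ih h hl.2 hr⟩
      · exact ⟨hr.1, ih h hl hr.2⟩

lemma exists_map_isLeft_eq (m : List Bool) (a : List α) (b : List β)
    (ha : a.length = m.count true) (hb : b.length = m.count false) :
    ∃ l : List (α ⊕ β), l.map Sum.isLeft = m ∧ l.filterMap Sum.getLeft? = a ∧
      l.filterMap Sum.getRight? = b := by
  induction m generalizing a b with
  | nil => exact ⟨[], by simp_all⟩
  | cons c m ih =>
    cases c
    · rcases b with _ | ⟨y, b⟩
      · simp at hb
      obtain ⟨l, hm, hl, hr⟩ := ih a b (by simpa using ha) (by simpa using hb)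
      exact ⟨.inr y :: l, by simp [filterMap_cons, hm, hl, hr]⟩
    · rcases a with _ | ⟨x, a⟩
      · simp at ha
      obtain ⟨l, hm, hl, hr⟩ := ih a b (by simpa using ha) (by simpa using hb)
      exact ⟨.inl x :: l, by simp [filterMap_cons, hm, hl, hr]⟩

open Finset in
theorem count_true_ofFn {L : ℕ} (S : Finset (Fin L)) :
    (ofFn fun i => decide (i ∈ S)).count true = #S := by
  simpa using (Fin.card_filter_univ_eq_vector_get_eq_count true
    (List.Vector.ofFn fun i => decide (i ∈ S))).symm

open Finset in
theorem card_bool_count_true (L s : ℕ) :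
    Nat.card {m : List Bool // m.length = L ∧ m.count true = s} = L.choose s := by
  let f : {S : Finset (Fin L) // #S = s} → {m : List Bool // m.length = L ∧ m.count true = s} :=
    fun S => ⟨ofFn fun i => decide (i ∈ S.1), by simp, by rw [count_true_ofFn, S.2]⟩
  have hf : f.Bijective := by
    refine ⟨fun S T h => ?_, fun ⟨m, hL, hs⟩ => ?_⟩
    · ext i
      simpa [f] using congrFun (ofFn_injective (congrArg Subtype.val h)) i
    · subst hL
      let S : Finset (Fin m.length) := {i | m[i] = true}
      have hm : (ofFn fun i => decide (i ∈ S)) = m := by simp [S]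
      exact ⟨⟨S, by rw [← hs, ← count_true_ofFn, hm]⟩, Subtype.ext hm⟩
  rw [← Nat.card_eq_of_bijective f hf, Nat.card_eq_fintype_card, Fintype.card_finset_len,
    Fintype.card_fin]

end List

lemma Nat.choose_mul_choose_sub_comm (m k j : ℕ) :
    m.choose k * (m - k).choose j = m.choose j * (m - j).choose k := by
  have hk := Nat.choose_mul (n := m) (k := k + j) (s := k) (by omega)
  have hj := Nat.choose_mul (n := m) (k := k + j) (s := j) (by omega)
  rw [Nat.add_sub_cancel_left] at hk
  rw [Nat.add_sub_cancel] at hj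
  rw [← hk, ← hj, Nat.choose_symm_add]

lemma succ_mul_choose_mul_catalan_mul_choose (n k j : ℕ) :
    (n + 1) * (n.choose (2 * k) * catalan k * (n - 2 * k).choose j) =
      (n + 1).choose (k + 1) * (n - k).choose j * (n - k - j).choose k := by
  have hcentral : (k + 1) * catalan k = (2 * k).choose k := by
    rw [succ_mul_catalan_eq_centralBinom, Nat.centralBinom_eq_two_mul_choose]
  have hsplit : n.choose (2 * k) * (2 * k).choose k = n.choose k * (n - k).choose k := by
    simpa [two_mul] using Nat.choose_mul (n := n) (k := 2 * k) (s := k) (by omega)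
  refine Nat.eq_of_mul_eq_mul_left k.succ_pos ?_
  calc (k + 1) * ((n + 1) * (n.choose (2 * k) * catalan k * (n - 2 * k).choose j))
      = (n + 1) * (n.choose (2 * k) * (2 * k).choose k) * (n - k - k).choose j := by
        rw [← hcentral, show n - 2 * k = n - k - k by omega]; ring
    _ = (n + 1) * n.choose k * ((n - k).choose k * (n - k - k).choose j) := by rw [hsplit]; ring
    _ = (n + 1) * n.choose k * ((n - k).choose j * (n - k - j).choose k) := by
        rw [Nat.choose_mul_choose_sub_comm]
    _ = (k + 1) * ((n + 1).choose (k + 1) * (n - k).choose j * (n - k - j).choose k) := by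
        rw [Nat.add_one_mul_choose_eq]; ring

namespace PlaneTree

@[simp] lemma edges_node (ts : List PlaneTree) :
    edges (node ts) = (ts.map (edges · + 1)).sum := by
  simp [edges]

@[simp] lemma isLeafInd_node_nil : isLeafInd (node []) = 1 := rfl

@[simp] lemma isLeafInd_node_cons (t : PlaneTree) (ts : List PlaneTree) :
    isLeafInd (node (t :: ts)) = 0 := rfl

@[simp] lemma oldLeaves_node_nil : oldLeaves (node []) = 0 := by simp [oldLeaves]

@[simp] lemma youngLeaves_node_nil : youngLeaves (node []) = 0 := by simp [youngLeaves]

@[simp] lemma oldLeaves_node_cons (t : PlaneTree) (ts : List PlaneTree) :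
    oldLeaves (node (t :: ts)) = isLeafInd t + oldLeaves t + (ts.map oldLeaves).sum := by
  simp [oldLeaves]

@[simp] lemma youngLeaves_node_cons (t : PlaneTree) (ts : List PlaneTree) :
    youngLeaves (node (t :: ts)) =
      youngLeaves t + (ts.map fun s => isLeafInd s + youngLeaves s).sum := by
  simp [youngLeaves]

end PlaneTree

inductive MotzkinTree where
  | leaf : MotzkinTree
  | unary : Bool → MotzkinTree → MotzkinTree
  | binary : MotzkinTree → MotzkinTree → MotzkinTree

namespace MotzkinTree

def size : MotzkinTree → ℕ
  | leaf => 0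
  | unary _ t => t.size + 1
  | binary l r => l.size + r.size + 2

def numBinary : MotzkinTree → ℕ
  | leaf => 0
  | unary _ t => t.numBinary
  | binary l r => l.numBinary + r.numBinary + 1

def numMarked : MotzkinTree → ℕ
  | leaf => 0
  | unary b t => t.numMarked + b.toNat
  | binary l r => l.numMarked + r.numMarked

open PlaneTree

/-- The first child and the remaining children of the root of the plane tree encoded by `t`: a
marked unary node inserts a leaf as second child, a binary node `binary l r` inserts the tree
encoded by `l` as second child. -/
def rootChildren : MotzkinTree → PlaneTree × List PlaneTree
  | leaf => (node [], [])
  | unary false t => (node (t.rootChildren.1 :: t.rootChildren.2), [])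
  | unary true t => (t.rootChildren.1, node [] :: t.rootChildren.2)
  | binary l r =>
      (r.rootChildren.1, node (l.rootChildren.1 :: l.rootChildren.2) :: r.rootChildren.2)

def toPlaneTree (t : MotzkinTree) : PlaneTree := node (t.rootChildren.1 :: t.rootChildren.2)

def ofRootChildren : PlaneTree → List PlaneTree → MotzkinTree
  | node [], [] => leaf
  | node (c :: cs), [] => unary false (ofRootChildren c cs)
  | t, node [] :: ts => unary true (ofRootChildren t ts)
  | t, node (c :: cs) :: ts => binary (ofRootChildren c cs) (ofRootChildren t ts)
termination_by t ts => sizeOf t + sizeOf ts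

lemma ofRootChildren_rootChildren (t : MotzkinTree) :
    ofRootChildren t.rootChildren.1 t.rootChildren.2 = t := by
  induction t with
  | leaf => simp [rootChildren, ofRootChildren]
  | unary b t ih => cases b <;> simp [rootChildren, ofRootChildren, ih]
  | binary l r ihl ihr => simp [rootChildren, ofRootChildren, ihl, ihr]

lemma rootChildren_ofRootChildren (t : PlaneTree) (ts : List PlaneTree) :
    (ofRootChildren t ts).rootChildren = (t, ts) := by
  induction t, ts using ofRootChildren.induct <;> simp_all [rootChildren, ofRootChildren]

lemma edges_toPlaneTree (t : MotzkinTree) : t.toPlaneTree.edges = t.size + 1 := by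
  induction t with
  | leaf => simp [toPlaneTree, rootChildren, size]
  | unary b t ih => cases b <;> simp_all [toPlaneTree, rootChildren, size]; omega
  | binary l r ihl ihr => simp_all [toPlaneTree, rootChildren, size]; omega

lemma oldLeaves_toPlaneTree (t : MotzkinTree) :
    t.toPlaneTree.oldLeaves = t.numBinary + 1 := by
  induction t with
  | leaf => simp [toPlaneTree, rootChildren, numBinary]
  | unary b t ih => cases b <;> simp_all [toPlaneTree, rootChildren, numBinary]
  | binary l r ihl ihr => simp_all [toPlaneTree, rootChildren, numBinary]; omega

lemma youngLeaves_toPlaneTree (t : MotzkinTree) :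
    t.toPlaneTree.youngLeaves = t.numMarked := by
  induction t with
  | leaf => simp [toPlaneTree, rootChildren, numMarked]
  | unary b t ih => cases b <;> simp_all [toPlaneTree, rootChildren, numMarked]; omega
  | binary l r ihl ihr => simp_all [toPlaneTree, rootChildren, numMarked]; omega

lemma toPlaneTree_ofRootChildren (t : PlaneTree) (ts : List PlaneTree) :
    (ofRootChildren t ts).toPlaneTree = node (t :: ts) := by
  simp [toPlaneTree, rootChildren_ofRootChildren]

lemma toPlaneTree_injective : Function.Injective toPlaneTree := by
  intro t t' h
  simp only [toPlaneTree, node.injEq, List.cons.injEq] at h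
  rw [← ofRootChildren_rootChildren t, ← ofRootChildren_rootChildren t', h.1, h.2]

open DyckStep

def toWord : MotzkinTree → List (DyckStep ⊕ Bool)
  | leaf => []
  | unary b t => .inr b :: t.toWord
  | binary l r => .inl U :: l.toWord ++ .inl D :: r.toWord

def skeleton : MotzkinTree → DyckWord
  | leaf => 0
  | unary _ t => t.skeleton
  | binary l r => l.skeleton.nest + r.skeleton

lemma length_toWord (t : MotzkinTree) : t.toWord.length = t.size := by
  induction t <;> simp_all [toWord, size]; omega

lemma filterMap_getLeft?_toWord (t : MotzkinTree) :
    t.toWord.filterMap Sum.getLeft? = t.skeleton.toList := by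
  induction t with
  | leaf => rfl
  | unary b t ih => simpa [toWord, skeleton, List.filterMap_cons]
  | binary l r ihl ihr =>
    change _ = l.skeleton.nest.toList ++ r.skeleton.toList
    simp [toWord, DyckWord.nest, ihl, ihr]

lemma semilength_skeleton (t : MotzkinTree) : t.skeleton.semilength = t.numBinary := by
  induction t <;> simp_all [skeleton, numBinary]; omega

lemma count_true_filterMap_getRight?_toWord (t : MotzkinTree) :
    (t.toWord.filterMap Sum.getRight?).count true = t.numMarked := by
  induction t with
  | leaf => rfl
  | unary b t ih => cases b <;> simp_all [toWord, numMarked]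
  | binary l r ihl ihr => simp_all [toWord, numMarked, List.filterMap_cons]

/-- No word of a Motzkin tree starts with `D`, so a continuation starting with `D` marks where
the word ends. -/
lemma toWord_append_inj {t t' : MotzkinTree} {s s' : List (DyckStep ⊕ Bool)}
    (h : t.toWord ++ s = t'.toWord ++ s') (hs : ∀ x ∈ s.head?, x = .inl D)
    (hs' : ∀ x ∈ s'.head?, x = .inl D) : t = t' ∧ s = s' := by
  induction t generalizing t' s s' with
  | leaf =>
    cases t' with
    | leaf => exact ⟨rfl, h⟩
    | unary => simp [toWord] at h; simp [h] at hs
    | binary => simp [toWord] at h; simp [h] at hs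
  | unary b t ih =>
    cases t' with
    | leaf => simp [toWord] at h; simp [← h] at hs'
    | unary b' t' =>
      simp only [toWord, List.cons_append, List.cons.injEq, Sum.inr.injEq] at h
      obtain ⟨rfl, rfl⟩ := ih h.2 hs hs'
      exact ⟨by rw [h.1], rfl⟩
    | binary => simp [toWord] at h
  | binary l r ihl ihr =>
    cases t' with
    | leaf => simp [toWord] at h; simp [← h] at hs'
    | unary => simp [toWord] at h
    | binary l' r' =>
      simp only [toWord, List.cons_append, List.append_assoc, List.cons.injEq, true_and] at h
      obtain ⟨rfl, hrest⟩ := ihl h (by simp) (by simp)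
      obtain ⟨rfl, rfl⟩ := ihr (List.cons_injective hrest) hs hs'
      exact ⟨rfl, rfl⟩

lemma toWord_injective : Function.Injective toWord := fun t t' h =>
  (toWord_append_inj (s := []) (s' := []) (by simpa using h) (by simp) (by simp)).1

lemma exists_toWord_eq (l : List (DyckStep ⊕ Bool)) (d : DyckWord)
    (hd : l.filterMap Sum.getLeft? = d.toList) : ∃ t : MotzkinTree, t.toWord = l := by
  match l with
  | [] => exact ⟨leaf, rfl⟩
  | .inr b :: l =>
    obtain ⟨t, ht⟩ := exists_toWord_eq l d (by simpa [List.filterMap_cons] using hd)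
    exact ⟨unary b t, by simp [toWord, ht]⟩
  | .inl D :: l =>
    have := d.count_D_le_count_U 1
    simp [← hd] at this
  | .inl U :: l =>
    -- the `D` matching the initial `U` is the one closing `d.insidePart` in `d`
    have hd0 : d ≠ 0 := by rintro rfl; simp at hd
    have hsplit : l.filterMap Sum.getLeft? =
        d.insidePart.toList ++ D :: d.outsidePart.toList := by
      have hnest := congrArg DyckWord.toList (DyckWord.nest_insidePart_add_outsidePart hd0)
      change ([U] ++ _ ++ [D]) ++ _ = _ at hnest
      simpa [← hd, List.filterMap_cons] using hnest.symm
    obtain ⟨l₁, l₂, hl, h₁, h₂⟩ := List.filterMap_eq_append_iff.1 hsplit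
    obtain ⟨l₃, x, l₄, hl₂, h₃, hx, h₄⟩ := List.filterMap_eq_cons_iff.1 h₂
    obtain rfl : x = .inl D := by simpa using hx
    obtain ⟨a, ha⟩ := exists_toWord_eq (l₁ ++ l₃) d.insidePart
      (by simp [h₁, List.filterMap_eq_nil_iff.2 h₃])
    obtain ⟨b, hb⟩ := exists_toWord_eq l₄ d.outsidePart h₄
    exact ⟨binary a b, by simp [toWord, ha, hb, hl, hl₂]⟩
termination_by l.length
decreasing_by all_goals simp_all <;> omega

lemma count_true_map_isLeft_toWord (t : MotzkinTree) :
    (t.toWord.map Sum.isLeft).count true = 2 * t.numBinary := by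
  rw [← List.length_filterMap_getLeft?, filterMap_getLeft?_toWord,
    ← DyckWord.two_mul_semilength_eq_length, semilength_skeleton]

lemma skeleton_eq_of_toWord_eq {t : MotzkinTree} {d : DyckWord} {l : List (DyckStep ⊕ Bool)}
    (ht : t.toWord = l) (hd : l.filterMap Sum.getLeft? = d.toList) : t.skeleton = d :=
  DyckWord.ext (by rw [← filterMap_getLeft?_toWord, ht, hd])

theorem card_eq_card_prod (n k j : ℕ) :
    Nat.card {t : MotzkinTree // t.size = n ∧ t.numBinary = k ∧ t.numMarked = j} =
      Nat.card ({m : List Bool // m.length = n ∧ m.count true = 2 * k} ×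
        {d : DyckWord // d.semilength = k} ×
        {b : List Bool // b.length = n - 2 * k ∧ b.count true = j}) := by
  refine Nat.card_eq_of_bijective
    (fun t => (⟨t.1.toWord.map Sum.isLeft, ?_⟩, ⟨t.1.skeleton, ?_⟩,
      ⟨t.1.toWord.filterMap Sum.getRight?, ?_⟩)) ⟨?_, ?_⟩
  · obtain ⟨t, rfl, rfl, -⟩ := t
    simp [length_toWord, count_true_map_isLeft_toWord]
  · rw [semilength_skeleton, t.2.2.1]
  · obtain ⟨t, rfl, rfl, rfl⟩ := t
    have := (t.toWord.map Sum.isLeft).count_true_add_count_false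
    rw [count_true_map_isLeft_toWord, List.length_map, length_toWord] at this
    dsimp only
    rw [List.length_filterMap_getRight?, count_true_filterMap_getRight?_toWord]
    omega
  · rintro ⟨t, _⟩ ⟨t', _⟩ h
    simp only [Prod.mk.injEq, Subtype.mk.injEq] at h
    obtain ⟨hmask, hskel, hright⟩ := h
    refine Subtype.ext (toWord_injective (List.eq_of_map_isLeft_eq hmask ?_ hright))
    rw [filterMap_getLeft?_toWord, filterMap_getLeft?_toWord, hskel]
  · rintro ⟨⟨m, hm, hmk⟩, ⟨d, hd⟩, ⟨b, hb, hbj⟩⟩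
    obtain ⟨l, hlm, hld, hlb⟩ := List.exists_map_isLeft_eq m d.toList b
      (by rw [← DyckWord.two_mul_semilength_eq_length, hd, hmk])
      (by have := m.count_true_add_count_false; omega)
    obtain ⟨t, ht⟩ := exists_toWord_eq l d hld
    have hskel := skeleton_eq_of_toWord_eq ht hld
    refine ⟨⟨t, ?_, ?_, ?_⟩, ?_⟩
    · rw [← length_toWord, ht, ← List.length_map (f := Sum.isLeft), hlm, hm]
    · rw [← semilength_skeleton, hskel, hd]
    · rw [← count_true_filterMap_getRight?_toWord, ht, hlb, hbj]
    · simp [ht, hlm, hskel, hlb]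

end MotzkinTree

open MotzkinTree in
theorem PlaneTree.card_eq_card_motzkinTree (n k j : ℕ) :
    Nat.card {T : PlaneTree // T.edges = n + 1 ∧ T.oldLeaves = k + 1 ∧ T.youngLeaves = j} =
      Nat.card {t : MotzkinTree // t.size = n ∧ t.numBinary = k ∧ t.numMarked = j} := by
  symm
  refine Nat.card_eq_of_bijective (fun t => ⟨t.1.toPlaneTree, ?_⟩) ⟨?_, ?_⟩
  · rw [edges_toPlaneTree, oldLeaves_toPlaneTree, youngLeaves_toPlaneTree, t.2.1, t.2.2.1, t.2.2.2]
    simp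
  · exact fun t t' h => Subtype.ext (toPlaneTree_injective (congrArg Subtype.val h))
  · rintro ⟨⟨_ | ⟨c, cs⟩⟩, hT⟩
    · simp at hT
    · have hc := toPlaneTree_ofRootChildren c cs
      rw [← hc, edges_toPlaneTree, oldLeaves_toPlaneTree, youngLeaves_toPlaneTree] at hT
      exact ⟨⟨ofRootChildren c cs, by omega⟩, Subtype.ext hc⟩

theorem PlaneTree.card_eq_choose_mul_catalan_mul_choose (n k j : ℕ) :
    Nat.card {T : PlaneTree // T.edges = n + 1 ∧ T.oldLeaves = k + 1 ∧ T.youngLeaves = j} =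
      n.choose (2 * k) * catalan k * (n - 2 * k).choose j := by
  rw [card_eq_card_motzkinTree, MotzkinTree.card_eq_card_prod, Nat.card_prod, Nat.card_prod,
    List.card_bool_count_true, List.card_bool_count_true,
    Nat.card_eq_fintype_card (α := {d : DyckWord // _}),
    DyckWord.card_dyckWord_semilength_eq_catalan, mul_assoc]

/-- The number of plane trees with `n` edges, `i` old leaves, and `j` young leaves is
`(1/n)·C(n,i)·C(n-i,j)·C(n-i-j,i-1)`. -/
theorem card_planeTrees_old_young (n i j : ℕ) (hn : 1 ≤ n) (hi : 1 ≤ i) :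
    (Nat.card {T : PlaneTree // T.edges = n ∧ T.oldLeaves = i ∧ T.youngLeaves = j} : ℚ) =
      (1 / n) * n.choose i * (n - i).choose j * (n - i - j).choose (i - 1) := by
  obtain ⟨n, rfl⟩ := Nat.exists_eq_add_of_le' hn
  obtain ⟨k, rfl⟩ := Nat.exists_eq_add_of_le' hi
  have key := succ_mul_choose_mul_catalan_mul_choose n k j
  rw [PlaneTree.card_eq_choose_mul_catalan_mul_choose, Nat.add_sub_add_right, Nat.add_sub_cancel]
  field_simp
  exact_mod_cast (mul_comm _ _).trans key
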